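/- arXiv:2104.05818 — 6 statements merged into one kernel-verified Lean document; each statement's English description precedes it below -/
import Mathlib

section
/- Let K : ℝ × ℝ → ℝ be a kernel, x ∈ ℝ, l⁻, l⁺ > 0, and suppose the integrals I⁻ = ∫_{x−l⁻}^{x} K(x,t) dt and I⁺ = ∫_{x}^{x+l⁺} K(x,t) dt are positive. Define the frame-invariant multipliers c⁻ = 1/(2 I⁻) and c⁺ = 1/(2 I⁺). Then for every affine function φ(t) = q·t + c (q, c ∈ ℝ), the nonlocal derivative satisfies D̄φ(x) = q. In particular, for a rigid-body motion whose classical derivative along each coordinate line is the constant entry Q_{ij} of an orthogonal matrix Q, the nonlocal deformation gradient at x equals Q, so the Green–Lagrange strain (QᵀQ − I)/2 vanishes. -/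
open MeasureTheory intervalIntegral

/-- The nonlocal derivative of `φ` at `x` with kernel `K`, horizon lengths `lm, lp`
and multipliers `cm, cp`. -/
noncomputable def nonlocalDeriv (K : ℝ × ℝ → ℝ) (lm lp cm cp : ℝ) (φ : ℝ → ℝ) (x : ℝ) : ℝ :=
  cm * (∫ t in (x - lm)..x, K (x, t) * deriv φ t) +
  cp * (∫ t in x..(x + lp), K (x, t) * deriv φ t)

lemma affine_key (K : ℝ × ℝ → ℝ) (x lm lp : ℝ)
    (hIm : 0 < ∫ t in (x - lm)..x, K (x, t))
    (hIp : 0 < ∫ t in x..(x + lp), K (x, t))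
    (cm cp : ℝ)
    (hcm : cm = 1 / (2 * ∫ t in (x - lm)..x, K (x, t)))
    (hcp : cp = 1 / (2 * ∫ t in x..(x + lp), K (x, t)))
    (q c : ℝ) : nonlocalDeriv K lm lp cm cp (fun t => q * t + c) x = q := by
  have hd : deriv (fun t : ℝ => q * t + c) = fun _ => q := by
    funext t
    have : HasDerivAt (fun t : ℝ => q * t + c) q t := by
      simpa using ((hasDerivAt_id t).const_mul q).add_const c
    exact this.deriv
  simp only [nonlocalDeriv, hd, intervalIntegral.integral_mul_const]
  rw [hcm, hcp]
  field_simp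
  ring

/-- with the frame-invariant multipliers, the nonlocal derivative of every
affine function `t ↦ q t + c` equals `q`; in particular, for a rigid-body motion with
orthogonal rotation `Q`, the nonlocal deformation gradient is `Q` and the Green–Lagrange
strain `(Qᵀ Q − I)/2` vanishes. -/
theorem stmt_0 (K : ℝ × ℝ → ℝ) (x lm lp : ℝ) (hlm : 0 < lm) (hlp : 0 < lp)
    (hIm : 0 < ∫ t in (x - lm)..x, K (x, t))
    (hIp : 0 < ∫ t in x..(x + lp), K (x, t))
    (cm cp : ℝ)
    (hcm : cm = 1 / (2 * ∫ t in (x - lm)..x, K (x, t)))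
    (hcp : cp = 1 / (2 * ∫ t in x..(x + lp), K (x, t))) :
    (∀ q c : ℝ, nonlocalDeriv K lm lp cm cp (fun t => q * t + c) x = q) ∧
    (∀ (n : ℕ) (Q : Matrix (Fin n) (Fin n) ℝ), Q ∈ Matrix.orthogonalGroup (Fin n) ℝ →
      ((∀ i j, nonlocalDeriv K lm lp cm cp (fun t => Q i j * t) x = Q i j) ∧
        (1 / 2 : ℝ) • (Q.transpose * Q - 1) = 0)) := by
  constructor
  · intro q c; exact affine_key K x lm lp hIm hIp cm cp hcm hcp q c
  · intro n Q hQ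
    refine ⟨fun i j => ?_, ?_⟩
    · have := affine_key K x lm lp hIm hIp cm cp hcm hcp (Q i j) 0
      simpa using this
    · have h1 : Q.transpose * Q = 1 := by
        have := hQ.1
        simpa [Matrix.star_eq_conjTranspose] using this
      simp [h1]
end

section
/- Locality recovery: let u : ℝⁿ → ℝⁿ be the linear displacement field u(y) = A y + b for a matrix A ∈ ℝ^{n×n} and b ∈ ℝⁿ. For each point x and each coordinate direction j, let the nonlocal directional derivative of the i-th component be D̄_{x_j} u_i(x) = c⁻_j ∫_{−l⁻_j}^{0} K_j(x, x+t e_j) (d/dt) u_i(x+t e_j) dt + c⁺_j ∫_{0}^{l⁺_j} K_j(x, x+t e_j) (d/dt) u_i(x+t e_j) dt, with the frame-invariant normalization c⁻_j = 1/(2∫_{−l⁻_j}^{0} K_j(x, x+t e_j) dt), c⁺_j = 1/(2∫_{0}^{l⁺_j} K_j(x, x+t e_j) dt) (both denominators assumed positive). Then D̄_{x_j} u_i(x) = A_{ij} at every point x, so the nonlocal strain ε(x) = (A + Aᵀ)/2 is the same constant at every point, independently of the kernels K_j and of the horizon lengths l⁻_j, l⁺_j; consequently the stress σ = C : ε and the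 strain energy density (1/2) σ : ε are also constant and length-scale independent. -/
open MeasureTheory intervalIntegral

/-- The nonlocal directional derivative, in the `j`-th coordinate direction, of the
`i`-th component of the displacement field `u : ℝⁿ → ℝⁿ` at the point `x`, with kernel
`K j`, horizon lengths `lm j, lp j`, and the frame-invariant normalization. -/
noncomputable def nonlocalDirDeriv (n : ℕ) (K : Fin n → (Fin n → ℝ) → (Fin n → ℝ) → ℝ)
    (lm lp : Fin n → ℝ) (u : (Fin n → ℝ) → (Fin n → ℝ)) (x : Fin n → ℝ) (i j : Fin n) : ℝ :=
  (1 / (2 * ∫ t in (-(lm j))..(0 : ℝ), K j x (x + t • (Pi.single j 1 : Fin n → ℝ)))) *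
    (∫ t in (-(lm j))..(0 : ℝ),
      K j x (x + t • (Pi.single j 1 : Fin n → ℝ)) * deriv (fun s : ℝ => u (x + s • (Pi.single j 1 : Fin n → ℝ)) i) t) +
  (1 / (2 * ∫ t in (0 : ℝ)..(lp j), K j x (x + t • (Pi.single j 1 : Fin n → ℝ)))) *
    (∫ t in (0 : ℝ)..(lp j),
      K j x (x + t • (Pi.single j 1 : Fin n → ℝ)) * deriv (fun s : ℝ => u (x + s • (Pi.single j 1 : Fin n → ℝ)) i) t)

/-- locality recovery: for the linear displacement field `u y = A y + b`,
the nonlocal directional derivative equals `A i j` at every point, so the nonlocal strain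
is the constant `(A + Aᵀ)/2`, independently of the kernels and horizon lengths, and the
stress `C : ε` and strain energy density `(1/2) σ : ε` are constant as well. -/
theorem stmt_1 (n : ℕ) (A : Matrix (Fin n) (Fin n) ℝ) (b : Fin n → ℝ)
    (K : Fin n → (Fin n → ℝ) → (Fin n → ℝ) → ℝ) (lm lp : Fin n → ℝ)
    (hlm : ∀ j, 0 < lm j) (hlp : ∀ j, 0 < lp j)
    (hIm : ∀ (x : Fin n → ℝ) (j : Fin n),
      0 < ∫ t in (-(lm j))..(0 : ℝ), K j x (x + t • (Pi.single j 1 : Fin n → ℝ)))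
    (hIp : ∀ (x : Fin n → ℝ) (j : Fin n),
      0 < ∫ t in (0 : ℝ)..(lp j), K j x (x + t • (Pi.single j 1 : Fin n → ℝ)))
    (u : (Fin n → ℝ) → (Fin n → ℝ)) (hu : ∀ y, u y = A.mulVec y + b)
    (ε : (Fin n → ℝ) → Matrix (Fin n) (Fin n) ℝ)
    (hε : ∀ x i j, ε x i j =
      (1 / 2) * (nonlocalDirDeriv n K lm lp u x i j + nonlocalDirDeriv n K lm lp u x j i))
    (C : Matrix (Fin n) (Fin n) ℝ →ₗ[ℝ] Matrix (Fin n) (Fin n) ℝ) :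
    (∀ (x : Fin n → ℝ) (i j : Fin n), nonlocalDirDeriv n K lm lp u x i j = A i j) ∧
    (∀ x : Fin n → ℝ, ε x = (1 / 2 : ℝ) • (A + A.transpose)) ∧
    (∀ x y : Fin n → ℝ, C (ε x) = C (ε y) ∧
      (1 / 2) * Matrix.trace ((C (ε x)).transpose * ε x) =
        (1 / 2) * Matrix.trace ((C (ε y)).transpose * ε y)) := by

  have key : ∀ (x : Fin n → ℝ) (i j : Fin n), nonlocalDirDeriv n K lm lp u x i j = A i j := by
    intro x i j
    have hderiv : (fun t : ℝ => deriv (fun s : ℝ => u (x + s • (Pi.single j 1 : Fin n → ℝ)) i) t)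
        = fun _ : ℝ => A i j := by
      funext t
      have hfun : (fun s : ℝ => u (x + s • (Pi.single j 1 : Fin n → ℝ)) i)
          = fun s : ℝ => (A.mulVec x i + b i) + s * A i j := by
        funext s
        rw [hu]
        simp [Matrix.mulVec_add, Matrix.mulVec_smul, Matrix.mulVec_single]
        ring
      rw [hfun]
      have : HasDerivAt (fun s : ℝ => (A.mulVec x i + b i) + s * A i j) (A i j) t := by
        simpa using ((hasDerivAt_id t).mul_const (A i j)).const_add (A.mulVec x i + b i)
      exact this.deriv
    have hm := hIm x j
    have hp := hIp x j
    unfold nonlocalDirDeriv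
    simp only [hderiv]
    rw [intervalIntegral.integral_mul_const, intervalIntegral.integral_mul_const]
    field_simp
    ring
  refine ⟨key, ?_, ?_⟩
  · intro x
    ext i j
    rw [hε x i j, key, key]
    simp [Matrix.add_apply, Matrix.transpose_apply]
  · have hconst : ∀ x : Fin n → ℝ, ε x = (1 / 2 : ℝ) • (A + A.transpose) := by
      intro x
      ext i j
      rw [hε x i j, key, key]
      simp [Matrix.add_apply, Matrix.transpose_apply]
    intro x y
    rw [hconst x, hconst y]
    exact ⟨rfl, rfl⟩
end

section
/- Boundary behavior of the normalized nonlocal operator: let K : ℝ × ℝ → ℝ be continuous with K(x₀,x₀) > 0, and let φ : ℝ → ℝ be continuously differentiable in a neighborhood of x₀. Then the normalized left-handed part of the nonlocal derivative satisfies lim_{l → 0⁺} [ ∫_{x₀−l}^{x₀} K(x₀,t) φ′(t) dt ] / [ 2 ∫_{x₀−l}^{x₀} K(x₀,t) dt ] = (1/2) φ′(x₀). Hence, as the truncated horizon l⁻ shrinks to zero at a boundary point, the nonlocal derivative D̄φ(x₀) tends to (1/2) φ′(x₀) + c⁺ ∫_{x₀}^{x₀+l⁺} K(x₀,t) φ′(t)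 dt. -/
open MeasureTheory intervalIntegral Filter Topology

/-! The left averages `l⁻¹ ∫_{x₀-l}^{x₀} f` converge to `f x₀` at every point of continuity
(fundamental theorem of calculus), so the normalized left part is a quotient of two averages
and tends to `K(x₀,x₀) φ'(x₀) / (2 K(x₀,x₀)) = φ'(x₀)/2`. -/

section LeftAverage

variable {E : Type*} [NormedAddCommGroup E] [NormedSpace ℝ E] [CompleteSpace E]

theorem hasDerivAt_integral_sub_left {f : ℝ → E} {x₀ : ℝ}
    (hmeas : StronglyMeasurableAtFilter f (𝓝 x₀)) (hcont : ContinuousAt f x₀) :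
    HasDerivAt (fun l : ℝ => ∫ t in (x₀ - l)..x₀, f t) (f x₀) 0 := by
  have hleft : HasDerivAt (fun u => ∫ t in u..x₀, f t) (-f x₀) (x₀ - 0) := by
    rw [sub_zero]
    exact integral_hasDerivAt_left IntervalIntegrable.refl hmeas hcont
  simpa [Function.comp_def] using hleft.scomp 0 ((hasDerivAt_id (0 : ℝ)).const_sub x₀)

theorem tendsto_inv_smul_integral_sub_left {f : ℝ → E} {x₀ : ℝ}
    (hmeas : StronglyMeasurableAtFilter f (𝓝 x₀)) (hcont : ContinuousAt f x₀) :
    Tendsto (fun l : ℝ => l⁻¹ • ∫ t in (x₀ - l)..x₀, f t) (𝓝[>] 0) (𝓝 (f x₀)) := by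
  simpa using (hasDerivAt_integral_sub_left hmeas hcont).tendsto_slope_zero_right

end LeftAverage

theorem tendsto_integral_sub_left_div_integral_sub_left {f g : ℝ → ℝ} {x₀ : ℝ}
    (hfm : StronglyMeasurableAtFilter f (𝓝 x₀)) (hfc : ContinuousAt f x₀)
    (hgm : StronglyMeasurableAtFilter g (𝓝 x₀)) (hgc : ContinuousAt g x₀) (hg : g x₀ ≠ 0) :
    Tendsto (fun l : ℝ => (∫ t in (x₀ - l)..x₀, f t) / ∫ t in (x₀ - l)..x₀, g t)
      (𝓝[>] 0) (𝓝 (f x₀ / g x₀)) := by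
  refine ((tendsto_inv_smul_integral_sub_left hfm hfc).div
    (tendsto_inv_smul_integral_sub_left hgm hgc) hg).congr' ?_
  filter_upwards [self_mem_nhdsWithin] with l (hl : 0 < l)
  simp only [smul_eq_mul]
  exact mul_div_mul_left _ _ (inv_ne_zero hl.ne')

theorem stmt_4_general (K : ℝ × ℝ → ℝ) (hK : Continuous K) (x₀ : ℝ) (hK0 : 0 < K (x₀, x₀))
    (φ : ℝ → ℝ) (hφ : ∃ s ∈ 𝓝 x₀, ContDiffOn ℝ 1 φ s) (cp lp : ℝ) :
    Tendsto
      (fun l : ℝ => (∫ t in (x₀ - l)..x₀, K (x₀, t) * deriv φ t) /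
        (2 * ∫ t in (x₀ - l)..x₀, K (x₀, t)))
      (𝓝[>] 0) (𝓝 ((1 / 2) * deriv φ x₀)) ∧
    Tendsto
      (fun l : ℝ =>
        (1 / (2 * ∫ t in (x₀ - l)..x₀, K (x₀, t))) *
            (∫ t in (x₀ - l)..x₀, K (x₀, t) * deriv φ t) +
          cp * ∫ t in x₀..(x₀ + lp), K (x₀, t) * deriv φ t)
      (𝓝[>] 0)
      (𝓝 ((1 / 2) * deriv φ x₀ + cp * ∫ t in x₀..(x₀ + lp), K (x₀, t) * deriv φ t)) := by
  obtain ⟨s, hs, hφs⟩ := hφ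
  have hx₀ : x₀ ∈ interior s := mem_interior_iff_mem_nhds.mpr hs
  have hKx : Continuous fun t => K (x₀, t) := hK.comp (continuous_const.prodMk continuous_id)
  have hf : ContinuousOn (fun t => K (x₀, t) * deriv φ t) (interior s) :=
    hKx.continuousOn.mul
      ((hφs.mono interior_subset).continuousOn_deriv_of_isOpen isOpen_interior le_rfl)
  have hratio := tendsto_integral_sub_left_div_integral_sub_left
    (hf.stronglyMeasurableAtFilter isOpen_interior x₀ hx₀)
    (hf.continuousAt (isOpen_interior.mem_nhds hx₀))
    (hKx.stronglyMeasurableAtFilter _ _) hKx.continuousAt hK0.ne'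
  have hleft : Tendsto
      (fun l : ℝ => (∫ t in (x₀ - l)..x₀, K (x₀, t) * deriv φ t) /
        (2 * ∫ t in (x₀ - l)..x₀, K (x₀, t)))
      (𝓝[>] 0) (𝓝 ((1 / 2) * deriv φ x₀)) := by
    convert hratio.const_mul (1 / 2) using 2 with l
    · rw [mul_comm (2 : ℝ), ← div_div, one_div_mul_eq_div]
    · rw [mul_div_cancel_left₀ _ hK0.ne']
  refine ⟨hleft, (hleft.add_const _).congr fun l => ?_⟩
  rw [one_div_mul_eq_div]

/-- at a boundary point `x₀`, as the truncated (left) horizon `l` shrinks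
to zero, the normalized left-handed part of the nonlocal derivative tends to
`(1/2) φ′(x₀)`, and the full nonlocal derivative tends to
`(1/2) φ′(x₀) + c⁺ ∫_{x₀}^{x₀+l⁺} K(x₀,t) φ′(t) dt`. -/
theorem stmt_4 (K : ℝ × ℝ → ℝ) (hK : Continuous K) (x₀ : ℝ) (hK0 : 0 < K (x₀, x₀))
    (φ : ℝ → ℝ) (hφ : ∃ s ∈ 𝓝 x₀, ContDiffOn ℝ 1 φ s) (cp lp : ℝ) (hlp : 0 < lp) :
    Tendsto
      (fun l : ℝ => (∫ t in (x₀ - l)..x₀, K (x₀, t) * deriv φ t) /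
        (2 * ∫ t in (x₀ - l)..x₀, K (x₀, t)))
      (𝓝[>] 0) (𝓝 ((1 / 2) * deriv φ x₀)) ∧
    Tendsto
      (fun l : ℝ =>
        (1 / (2 * ∫ t in (x₀ - l)..x₀, K (x₀, t))) *
            (∫ t in (x₀ - l)..x₀, K (x₀, t) * deriv φ t) +
          cp * ∫ t in x₀..(x₀ + lp), K (x₀, t) * deriv φ t)
      (𝓝[>] 0)
      (𝓝 ((1 / 2) * deriv φ x₀ + cp * ∫ t in x₀..(x₀ + lp), K (x₀, t) * deriv φ t)) :=
  stmt_4_general K hK x₀ hK0 φ hφ cp lp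
end

section
/- Adjoint (integration-by-parts) identity underlying the nonlocal governing equations: let K : ℝ × ℝ → ℝ be continuous, l⁻, l⁺ > 0, c⁻, c⁺ ∈ ℝ, let σ : ℝ → ℝ be continuous and bounded, and let v : ℝ → ℝ be continuously differentiable with compact support. Define D̄v(x) = c⁻ ∫_{x−l⁻}^{x} K(x,t) v′(t) dt + c⁺ ∫_{x}^{x+l⁺} K(x,t) v′(t) dt and Ĩσ(x) = c⁻ ∫_{x}^{x+l⁻} K(s,x) σ(s) ds + c⁺ ∫_{x−l⁺}^{x} K(s,x) σ(s) ds. If Ĩσ is continuously differentiable, then ∫_ℝ σ(x) (D̄v)(x) dx = ∫_ℝ (Ĩσ)(x) v′(x) dx = − ∫_ℝ (d/dx Ĩσ)(x) v(x) dx. -/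
/-!
Both sides of the first identity are iterated integrals of `σ(x) K(x,t) v′(t)` over a diagonal
strip of the plane; since `v′` has compact support the integrand is supported in a compact part
of the strip, so Fubini applies and exchanging the order of integration turns the windows of
`D̄` into the mirrored windows of `Ĩ`. The second identity is integration by parts, with no
boundary terms because `v` has compact support.
-/

open MeasureTheory intervalIntegral

/-- The nonlocal derivative `D̄v` of a displacement `v`. -/
noncomputable def Dbar (K : ℝ × ℝ → ℝ) (lm lp cm cp : ℝ) (v : ℝ → ℝ) (x : ℝ) : ℝ :=
  cm * (∫ t in (x - lm)..x, K (x, t) * deriv v t) +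
  cp * (∫ t in x..(x + lp), K (x, t) * deriv v t)

/-- The adjoint convolution operator `Ĩσ` of a stress field `σ`. -/
noncomputable def Itilde (K : ℝ × ℝ → ℝ) (lm lp cm cp : ℝ) (σ : ℝ → ℝ) (x : ℝ) : ℝ :=
  cm * (∫ s in x..(x + lm), K (s, x) * σ s) +
  cp * (∫ s in (x - lp)..x, K (s, x) * σ s)

def diagonalStrip (a b : ℝ) : Set (ℝ × ℝ) := {q | q.1 + a < q.2 ∧ q.2 ≤ q.1 + b}

lemma measurableSet_diagonalStrip (a b : ℝ) : MeasurableSet (diagonalStrip a b) :=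
  (measurableSet_lt (measurable_fst.add_const a) measurable_snd).inter
    (measurableSet_le measurable_snd (measurable_fst.add_const b))

lemma integral_indicator_diagonalStrip_fst {a b : ℝ} (hab : a ≤ b) (f : ℝ × ℝ → ℝ) (x : ℝ) :
    ∫ t, (diagonalStrip a b).indicator f (x, t) = ∫ t in (x + a)..(x + b), f (x, t) := by
  rw [intervalIntegral.integral_of_le (by linarith),
    ← MeasureTheory.integral_indicator measurableSet_Ioc]
  rfl

lemma integral_indicator_diagonalStrip_snd {a b : ℝ} (hab : a ≤ b) (f : ℝ × ℝ → ℝ) (t : ℝ) :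
    ∫ x, (diagonalStrip a b).indicator f (x, t) = ∫ s in (t - b)..(t - a), f (s, t) := by
  rw [intervalIntegral.integral_of_le (by linarith), ← MeasureTheory.integral_Ico_eq_integral_Ioc,
    ← MeasureTheory.integral_indicator measurableSet_Ico]
  congr 1 with x
  simp only [Set.indicator_apply, diagonalStrip, Set.mem_ofPred_eq, Set.mem_Ico]
  congr 1
  exact propext ⟨fun ⟨h₁, h₂⟩ => ⟨by linarith, by linarith⟩,
    fun ⟨h₁, h₂⟩ => ⟨by linarith, by linarith⟩⟩

section Swap

variable {g : ℝ × ℝ → ℝ} {σ w : ℝ → ℝ}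

lemma integrable_indicator_diagonalStrip (hg : Continuous g) (hσ : Continuous σ)
    (hw : Continuous w) (hws : HasCompactSupport w) (a b : ℝ) :
    Integrable ((diagonalStrip a b).indicator fun q => σ q.1 * (g q * w q.2)) := by
  obtain ⟨R, hR⟩ := hws.isCompact.isBounded.subset_closedBall 0
  set B := Set.Icc (-R - b) (R - a) ×ˢ Set.Icc (-R) R
  have hB : IsCompact B := isCompact_Icc.prod isCompact_Icc
  have hsupp : Function.support
      ((diagonalStrip a b).indicator fun q => σ q.1 * (g q * w q.2)) ⊆ B := by
    rintro ⟨x, t⟩ hq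
    rw [Set.support_indicator] at hq
    obtain ⟨⟨hlo, hhi⟩, hne⟩ := hq
    have ht : |t| ≤ R := by
      simpa [Real.dist_eq] using
        hR (subset_tsupport w (right_ne_zero_of_mul (right_ne_zero_of_mul hne)))
    obtain ⟨h1, h2⟩ := abs_le.1 ht
    exact ⟨⟨by linarith, by linarith⟩, h1, h2⟩
  rw [← Set.indicator_eq_self.2 hsupp, integrable_indicator_iff hB.measurableSet]
  exact (((hσ.comp continuous_fst).mul (hg.mul (hw.comp continuous_snd))).continuousOn
    |>.integrableOn_compact hB).indicator (measurableSet_diagonalStrip a b)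

lemma integral_mul_intervalIntegral_comm_of_le (hg : Continuous g) (hσ : Continuous σ)
    (hw : Continuous w) (hws : HasCompactSupport w) {a b : ℝ} (hab : a ≤ b) :
    Integrable (fun x => σ x * ∫ t in (x + a)..(x + b), g (x, t) * w t) ∧
    Integrable (fun t => w t * ∫ s in (t - b)..(t - a), g (s, t) * σ s) ∧
    ∫ x, σ x * ∫ t in (x + a)..(x + b), g (x, t) * w t =
      ∫ t, w t * ∫ s in (t - b)..(t - a), g (s, t) * σ s := by
  set F := (diagonalStrip a b).indicator fun q => σ q.1 * (g q * w q.2)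
  have hF : Integrable F (volume.prod volume) :=
    integrable_indicator_diagonalStrip hg hσ hw hws a b
  have hfst : ∀ x, ∫ t, F (x, t) = σ x * ∫ t in (x + a)..(x + b), g (x, t) * w t := fun x => by
    rw [integral_indicator_diagonalStrip_fst hab, ← intervalIntegral.integral_const_mul]
  have hsnd : ∀ t, ∫ x, F (x, t) = w t * ∫ s in (t - b)..(t - a), g (s, t) * σ s := fun t => by
    rw [integral_indicator_diagonalStrip_snd hab, ← intervalIntegral.integral_const_mul]
    congr 1 with s
    ring
  simp only [← hfst, ← hsnd]
  exact ⟨hF.integral_prod_left, hF.integral_prod_right, integral_integral_swap hF⟩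

theorem integral_mul_intervalIntegral_comm (hg : Continuous g) (hσ : Continuous σ)
    (hw : Continuous w) (hws : HasCompactSupport w) (a b : ℝ) :
    Integrable (fun x => σ x * ∫ t in (x + a)..(x + b), g (x, t) * w t) ∧
    Integrable (fun t => w t * ∫ s in (t - b)..(t - a), g (s, t) * σ s) ∧
    ∫ x, σ x * ∫ t in (x + a)..(x + b), g (x, t) * w t =
      ∫ t, w t * ∫ s in (t - b)..(t - a), g (s, t) * σ s := by
  rcases le_total a b with hab | hba
  · exact integral_mul_intervalIntegral_comm_of_le hg hσ hw hws hab
  · obtain ⟨hl, hr, heq⟩ := integral_mul_intervalIntegral_comm_of_le hg hσ hw hws hba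
    have hsymm (c d : ℝ) (f : ℝ → ℝ) : ∫ t in c..d, f t = -∫ t in d..c, f t :=
      intervalIntegral.integral_symm d c
    simp only [hsymm (_ + a), hsymm (_ - b), mul_neg, MeasureTheory.integral_neg, heq,
      and_true]
    exact ⟨hl.neg, hr.neg⟩

end Swap

theorem integral_mul_Dbar_eq_integral_Itilde_mul {K : ℝ × ℝ → ℝ} {σ v : ℝ → ℝ}
    (hK : Continuous K) (hσ : Continuous σ) (hv : Continuous (deriv v))
    (hvs : HasCompactSupport (deriv v)) (lm lp cm cp : ℝ) :
    ∫ x, σ x * Dbar K lm lp cm cp v x = ∫ x, Itilde K lm lp cm cp σ x * deriv v x := by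
  obtain ⟨hml, hmr, hm⟩ := integral_mul_intervalIntegral_comm hK hσ hv hvs (-lm) 0
  obtain ⟨hpl, hpr, hp⟩ := integral_mul_intervalIntegral_comm hK hσ hv hvs 0 lp
  simp only [add_zero, sub_zero, sub_neg_eq_add, ← sub_eq_add_neg] at hml hmr hm hpl hpr hp
  calc ∫ x, σ x * Dbar K lm lp cm cp v x
      = ∫ x, cm * (σ x * ∫ t in (x - lm)..x, K (x, t) * deriv v t) +
          cp * (σ x * ∫ t in x..(x + lp), K (x, t) * deriv v t) := by
        congr 1 with x
        rw [Dbar]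
        ring
    _ = cm * (∫ t, deriv v t * ∫ s in t..(t + lm), K (s, t) * σ s) +
          cp * ∫ t, deriv v t * ∫ s in (t - lp)..t, K (s, t) * σ s := by
        rw [integral_add (hml.const_mul cm) (hpl.const_mul cp), MeasureTheory.integral_const_mul,
          MeasureTheory.integral_const_mul, hm, hp]
    _ = ∫ x, Itilde K lm lp cm cp σ x * deriv v x := by
        rw [← MeasureTheory.integral_const_mul, ← MeasureTheory.integral_const_mul,
          ← integral_add (hmr.const_mul cm) (hpr.const_mul cp)]
        congr 1 with x
        rw [Itilde]
        ring

theorem integral_mul_deriv_eq_neg_integral_deriv_mul {u v : ℝ → ℝ} (hu : ContDiff ℝ 1 u)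
    (hv : ContDiff ℝ 1 v) (hvs : HasCompactSupport v) :
    ∫ x, u x * deriv v x = -∫ x, deriv u x * v x :=
  integral_mul_deriv_eq_deriv_mul_of_integrable
    (fun x _ => (hu.differentiable one_ne_zero x).hasDerivAt)
    (fun x _ => (hv.differentiable one_ne_zero x).hasDerivAt)
    ((hu.continuous.mul (hv.continuous_deriv le_rfl)).integrable_of_hasCompactSupport
      hvs.deriv.mul_left)
    (((hu.continuous_deriv le_rfl).mul hv.continuous).integrable_of_hasCompactSupport
      hvs.mul_left)
    ((hu.continuous.mul hv.continuous).integrable_of_hasCompactSupport hvs.mul_left)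

theorem stmt_7_general (K : ℝ × ℝ → ℝ) (hK : Continuous K) (lm lp : ℝ)
    (cm cp : ℝ) (σ : ℝ → ℝ) (hσ : Continuous σ)
    (v : ℝ → ℝ) (hv : ContDiff ℝ 1 v) (hvs : HasCompactSupport v)
    (hI : ContDiff ℝ 1 (Itilde K lm lp cm cp σ)) :
    (∫ x : ℝ, σ x * Dbar K lm lp cm cp v x) =
        (∫ x : ℝ, Itilde K lm lp cm cp σ x * deriv v x) ∧
    (∫ x : ℝ, Itilde K lm lp cm cp σ x * deriv v x) =
        -∫ x : ℝ, deriv (Itilde K lm lp cm cp σ) x * v x :=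
  ⟨integral_mul_Dbar_eq_integral_Itilde_mul hK hσ (hv.continuous_deriv le_rfl) hvs.deriv
      lm lp cm cp,
    integral_mul_deriv_eq_neg_integral_deriv_mul hI hv hvs⟩

/-- the adjoint (integration-by-parts) identity underlying the nonlocal
governing equations: `∫ σ D̄v = ∫ (Ĩσ) v′ = −∫ (Ĩσ)′ v`. -/
theorem stmt_7 (K : ℝ × ℝ → ℝ) (hK : Continuous K) (lm lp : ℝ) (hlm : 0 < lm)
    (hlp : 0 < lp) (cm cp : ℝ) (σ : ℝ → ℝ) (hσ : Continuous σ)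
    (hσb : ∃ M : ℝ, ∀ x, |σ x| ≤ M)
    (v : ℝ → ℝ) (hv : ContDiff ℝ 1 v) (hvs : HasCompactSupport v)
    (hI : ContDiff ℝ 1 (Itilde K lm lp cm cp σ)) :
    (∫ x : ℝ, σ x * Dbar K lm lp cm cp v x) =
        (∫ x : ℝ, Itilde K lm lp cm cp σ x * deriv v x) ∧
    (∫ x : ℝ, Itilde K lm lp cm cp σ x * deriv v x) =
        -∫ x : ℝ, deriv (Itilde K lm lp cm cp σ) x * v x :=
  stmt_7_general K hK lm lp cm cp σ hσ v hv hvs hI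
end

section
/- Oscillatory power-law integral: for α ∈ (0,1) and k > 0, the improper integral ∫_0^∞ s^{−α} exp(−i k s) ds converges, i.e. lim_{R→∞} ∫_0^R s^{−α} exp(−i k s) ds exists, and equals Γ(1−α) · k^{α−1} · exp(−i π (1−α)/2). -/
/-!
The substitution `s = exp z` turns `s ^ (-α) * exp (-(c * s)) ds` into the entire function
`exp ((1 - α) z - c exp z) dz`, so Cauchy's theorem on the rectangle
`[log a, log R] × [-π/2, 0]` rotates the ray of integration. For `c = I k` the bottom side is
`exp (-I π (1 - α) / 2)` times the same integral with `c = k`, which is the Gamma integral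
`Γ(1 - α) k ^ (α - 1)`. The vertical sides are `O(a ^ (1 - α))` at `log a` and, by Jordan's
inequality, `O(R ^ (-α) / k)` at `log R`.
-/

open MeasureTheory intervalIntegral Filter Topology Complex

noncomputable section

def powExp (α : ℝ) (c : ℂ) (s : ℝ) : ℂ :=
  ((s ^ (-α) : ℝ) : ℂ) * exp (-(c * s))

def expIntegrand (α : ℝ) (c : ℂ) (z : ℂ) : ℂ :=
  exp ((1 - α) * z) * exp (-(c * exp z))

def verticalIntegral (α : ℝ) (c : ℂ) (x : ℝ) : ℂ :=
  I • ∫ y in -(Real.pi / 2)..0, expIntegrand α c (x + y * I)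

end

section

variable {α : ℝ} {c : ℂ}

lemma differentiable_expIntegrand : Differentiable ℂ (expIntegrand α c) := by
  unfold expIntegrand
  fun_prop

lemma continuousOn_powExp : ContinuousOn (powExp α c) (Set.Ioi 0) :=
  (continuous_ofReal.comp_continuousOn
    (continuousOn_id.rpow_const fun _ hx => Or.inl (ne_of_gt hx))).mul (by fun_prop)

lemma intervalIntegrable_powExp (hα : α < 1) (a b : ℝ) :
    IntervalIntegrable (powExp α c) volume a b := by
  have hpow : IntervalIntegrable (fun s : ℝ => ((s ^ (-α) : ℝ) : ℂ)) volume a b := by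
    have h := intervalIntegrable_rpow' (a := a) (b := b) (show -1 < -α by linarith)
    exact ⟨h.1.ofReal, h.2.ofReal⟩
  exact hpow.mul_continuousOn (by fun_prop)

lemma expIntegrand_ofReal (x : ℝ) :
    expIntegrand α c x = Real.exp x • powExp α c (Real.exp x) := by
  have hpow : ((Real.exp x ^ (-α) : ℝ) : ℂ) = exp (-α * x) := by
    rw [Real.rpow_def_of_pos (Real.exp_pos x), Real.log_exp, ofReal_exp, mul_comm]
    push_cast
    rfl
  simp only [expIntegrand, powExp, hpow, real_smul, ofReal_exp, ← exp_add]
  ring_nf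

lemma expIntegrand_add_neg_pi_div_two_mul_I (x : ℝ) :
    expIntegrand α c (x + (-(Real.pi / 2) : ℝ) * I) =
      expIntegrand α (-(c * I)) x * exp (-(I * Real.pi * (1 - α) / 2)) := by
  have hexp : exp (x + (-(Real.pi / 2) : ℝ) * I) = -I * exp x := by
    rw [exp_add, exp_mul_I, ← ofReal_cos, ← ofReal_sin, Real.cos_neg, Real.sin_neg,
      Real.cos_pi_div_two, Real.sin_pi_div_two]
    push_cast
    ring
  simp only [expIntegrand, hexp, ← mul_assoc, ← exp_add]
  push_cast
  ring_nf

lemma integral_exp_smul_comp_exp {E : Type*} [NormedAddCommGroup E] [NormedSpace ℝ E]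
    {g : ℝ → E} (hg : ContinuousOn g (Set.Ioi 0)) (a b : ℝ) :
    ∫ x in a..b, Real.exp x • g (Real.exp x) = ∫ s in Real.exp a..Real.exp b, g s := by
  have himg : Real.exp '' Set.uIcc a b ⊆ Set.Ioi 0 := by
    rintro _ ⟨x, -, rfl⟩
    exact Real.exp_pos x
  simpa only [Function.comp_def] using
    integral_deriv_smul_comp' (fun x _ => Real.hasDerivAt_exp x) Real.continuous_exp.continuousOn
      (hg.mono himg)

lemma integral_powExp_eq_integral_expIntegrand {a b : ℝ} (ha : 0 < a) (hb : 0 < b) :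
    ∫ s in a..b, powExp α c s = ∫ x in Real.log a..Real.log b, expIntegrand α c x := by
  simp only [expIntegrand_ofReal]
  rw [integral_exp_smul_comp_exp continuousOn_powExp, Real.exp_log ha, Real.exp_log hb]

lemma integral_expIntegrand_eq_add_verticalIntegral (a b : ℝ) :
    ∫ x in a..b, expIntegrand α c x =
      (∫ x in a..b, expIntegrand α c (x + (-(Real.pi / 2) : ℝ) * I))
        + verticalIntegral α c b - verticalIntegral α c a := by
  have h := integral_boundary_rect_eq_zero_of_differentiableOn (expIntegrand α c)
    ⟨a, -(Real.pi / 2)⟩ ⟨b, 0⟩ differentiable_expIntegrand.differentiableOn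
  simp only [ofReal_zero, zero_mul, add_zero] at h
  rw [verticalIntegral, verticalIntegral]
  linear_combination -h

end

section

variable {α k : ℝ}

lemma norm_expIntegrand_I_mul (x y : ℝ) :
    ‖expIntegrand α (I * k) (x + y * I)‖ =
      Real.exp ((1 - α) * x + k * Real.exp x * Real.sin y) := by
  rw [expIntegrand, norm_mul, norm_exp, norm_exp, ← Real.exp_add]
  congr 1
  simp only [mul_re, sub_re, one_re, ofReal_re, add_re, I_re, mul_zero, ofReal_im, I_im, mul_one,
    sub_self, add_zero, sub_im, one_im, add_im, mul_im, zero_add, zero_mul, sub_zero, neg_re,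
    exp_re, one_mul, exp_im, zero_sub, neg_neg, add_right_inj]
  ring

lemma norm_verticalIntegral_le (hk : 0 ≤ k) (x : ℝ) :
    ‖verticalIntegral α (I * k) x‖ ≤ Real.pi / 2 * Real.exp ((1 - α) * x) := by
  have hπ := Real.pi_pos
  rw [verticalIntegral, norm_smul, norm_I, one_mul]
  refine (intervalIntegral.norm_integral_le_of_norm_le_const (C := Real.exp ((1 - α) * x))
    fun y hy => ?_).trans_eq ?_
  · rw [Set.uIoc_of_le (by linarith)] at hy
    rw [norm_expIntegrand_I_mul, Real.exp_le_exp]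
    have hsin : Real.sin y ≤ 0 := Real.sin_nonpos_of_nonpos_of_neg_pi_le hy.2 (by linarith [hy.1])
    nlinarith [mul_nonneg hk (Real.exp_pos x).le]
  · rw [zero_sub, neg_neg, abs_of_pos (by positivity)]
    ring

lemma norm_verticalIntegral_le_of_pos (hk : 0 < k) (x : ℝ) :
    ‖verticalIntegral α (I * k) x‖ ≤ Real.pi / (2 * k) * Real.exp (-α * x) := by
  have hπ := Real.pi_pos
  set c : ℝ := 2 * k * Real.exp x / Real.pi with hc
  have hcpos : 0 < c := by positivity
  have hcont : Continuous fun y : ℝ => expIntegrand α (I * k) (x + y * I) :=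
    differentiable_expIntegrand.continuous.comp (by fun_prop)
  have hpointwise : ∀ y ∈ Set.Icc (-(Real.pi / 2)) 0,
      ‖expIntegrand α (I * k) (x + y * I)‖ ≤ Real.exp ((1 - α) * x) * Real.exp (c * y) := by
    intro y hy
    rw [norm_expIntegrand_I_mul, ← Real.exp_add, Real.exp_le_exp]
    have hjordan : k * Real.exp x * Real.sin y ≤ k * Real.exp x * (2 / Real.pi * y) :=
      mul_le_mul_of_nonneg_left (Real.sin_le_mul hy.1 hy.2) (by positivity)
    have : k * Real.exp x * (2 / Real.pi * y) = c * y := by rw [hc]; field_simp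
    linarith
  have hexp_integral : ∫ y in -(Real.pi / 2)..0, Real.exp (c * y) =
      (1 - Real.exp (c * -(Real.pi / 2))) / c := by
    rw [integral_comp_mul_left (fun u => Real.exp u) hcpos.ne', integral_exp]
    simp only [mul_zero, Real.exp_zero, smul_eq_mul]
    ring
  rw [verticalIntegral, norm_smul, norm_I, one_mul]
  calc ‖∫ y in -(Real.pi / 2)..0, expIntegrand α (I * k) (x + y * I)‖
      ≤ ∫ y in -(Real.pi / 2)..0, ‖expIntegrand α (I * k) (x + y * I)‖ :=
        norm_integral_le_integral_norm (by linarith)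
    _ ≤ ∫ y in -(Real.pi / 2)..0, Real.exp ((1 - α) * x) * Real.exp (c * y) :=
        integral_mono_on (by linarith) (hcont.norm.intervalIntegrable _ _)
          (Continuous.intervalIntegrable (by fun_prop) _ _) hpointwise
    _ = Real.exp ((1 - α) * x) * ((1 - Real.exp (c * -(Real.pi / 2))) / c) := by
        rw [intervalIntegral.integral_const_mul, hexp_integral]
    _ ≤ Real.exp ((1 - α) * x) * (1 / c) := by
        gcongr
        linarith [Real.exp_pos (c * -(Real.pi / 2))]
    _ = Real.pi / (2 * k) * Real.exp (-α * x) := by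
        rw [show -α * x = (1 - α) * x - x by ring, Real.exp_sub, hc]
        field_simp

lemma tendsto_verticalIntegral_atBot (hα : α < 1) (hk : 0 ≤ k) :
    Tendsto (verticalIntegral α (I * k)) atBot (𝓝 0) := by
  have hexp : Tendsto (fun x => Real.pi / 2 * Real.exp ((1 - α) * x)) atBot (𝓝 0) := by
    simpa using (Real.tendsto_exp_atBot.comp
      (tendsto_id.const_mul_atBot (by linarith : 0 < 1 - α))).const_mul (Real.pi / 2)
  exact squeeze_zero_norm (norm_verticalIntegral_le hk) hexp

lemma tendsto_verticalIntegral_atTop (hα : 0 < α) (hk : 0 < k) :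
    Tendsto (verticalIntegral α (I * k)) atTop (𝓝 0) := by
  have hexp : Tendsto (fun x => Real.pi / (2 * k) * Real.exp (-α * x)) atTop (𝓝 0) := by
    simpa using (Real.tendsto_exp_atBot.comp
      (tendsto_id.const_mul_atTop_of_neg (by linarith : -α < 0))).const_mul (Real.pi / (2 * k))
  exact squeeze_zero_norm (norm_verticalIntegral_le_of_pos hk) hexp

lemma integral_powExp_I_mul_eq {a b : ℝ} (ha : 0 < a) (hb : 0 < b) :
    ∫ s in a..b, powExp α (I * k) s =
      (∫ s in a..b, powExp α k s) * exp (-(I * Real.pi * (1 - α) / 2))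
        + verticalIntegral α (I * k) (Real.log b) - verticalIntegral α (I * k) (Real.log a) := by
  have hrot : -(I * k * I) = (k : ℂ) := by
    linear_combination (-(k : ℂ)) * I_mul_I
  rw [integral_powExp_eq_integral_expIntegrand ha hb,
    integral_expIntegrand_eq_add_verticalIntegral, integral_powExp_eq_integral_expIntegrand ha hb,
    ← intervalIntegral.integral_mul_const]
  simp only [expIntegrand_add_neg_pi_div_two_mul_I, hrot]

lemma integral_zero_powExp_I_mul_eq (hα : α < 1) (hk : 0 ≤ k) {b : ℝ} (hb : 0 < b) :
    ∫ s in 0..b, powExp α (I * k) s =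
      (∫ s in 0..b, powExp α k s) * exp (-(I * Real.pi * (1 - α) / 2))
        + verticalIntegral α (I * k) (Real.log b) := by
  have hleft (c : ℂ) : Tendsto (fun a => ∫ s in a..b, powExp α c s) (𝓝[>] 0)
      (𝓝 (∫ s in 0..b, powExp α c s)) := by
    have := ((continuous_primitive (intervalIntegrable_powExp (c := c) hα) b).tendsto 0).neg
      |>.mono_left (nhdsWithin_le_nhds (s := Set.Ioi 0))
    simpa only [← integral_symm] using this
  have hvert : Tendsto (fun a => verticalIntegral α (I * k) (Real.log a)) (𝓝[>] 0) (𝓝 0) :=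
    (tendsto_verticalIntegral_atBot hα hk).comp Real.tendsto_log_nhdsGT_zero
  have hrhs := (((hleft k).mul_const (exp (-(I * Real.pi * (1 - α) / 2)))).add_const
    (verticalIntegral α (I * k) (Real.log b))).sub hvert
  rw [sub_zero] at hrhs
  refine tendsto_nhds_unique_of_eventuallyEq (hleft (I * k)) hrhs ?_
  filter_upwards [self_mem_nhdsWithin] with a ha
  exact integral_powExp_I_mul_eq ha hb

lemma tendsto_integral_powExp_ofReal (hα : α < 1) (hk : 0 < k) :
    Tendsto (fun R => ∫ s in 0..R, powExp α k s) atTop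
      (𝓝 ((Real.Gamma (1 - α) * k ^ (α - 1) : ℝ) : ℂ)) := by
  have hreal (s : ℝ) : powExp α k s = ((s ^ (-α) * Real.exp (-(k * s)) : ℝ) : ℂ) := by
    simp [powExp, ofReal_exp]
  have hint : IntegrableOn (fun s : ℝ => s ^ (-α) * Real.exp (-(k * s))) (Set.Ioi 0) := by
    simpa [Real.rpow_one] using
      integrableOn_rpow_mul_exp_neg_mul_rpow (s := -α) (by linarith) one_pos hk
  have hval : ∫ s in Set.Ioi 0, s ^ (-α) * Real.exp (-(k * s)) =
      Real.Gamma (1 - α) * k ^ (α - 1) := by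
    have := Real.integral_rpow_mul_exp_neg_mul_Ioi (a := 1 - α) (by linarith) hk
    rw [show 1 - α - 1 = -α by ring] at this
    rw [this, one_div, Real.inv_rpow hk.le, ← Real.rpow_neg hk.le, neg_sub, mul_comm]
  simp only [hreal, intervalIntegral.integral_ofReal]
  exact (continuous_ofReal.tendsto _).comp
    (hval ▸ intervalIntegral_tendsto_integral_Ioi 0 hint tendsto_id)

end

/-- the improper oscillatory power-law integral
`∫₀^∞ s^{−α} e^{−iks} ds` converges (as the limit of `∫₀^R` as `R → ∞`) and equals
`Γ(1−α) k^{α−1} exp(−iπ(1−α)/2)`. -/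
theorem stmt_11 (α k : ℝ) (hα : α ∈ Set.Ioo (0 : ℝ) 1) (hk : 0 < k) :
    Tendsto
      (fun R : ℝ => ∫ s in (0 : ℝ)..R, ((s ^ (-α) : ℝ) : ℂ) *
        Complex.exp (-(Complex.I * k * s)))
      atTop
      (𝓝 (((Real.Gamma (1 - α) * k ^ (α - 1) : ℝ) : ℂ) *
        Complex.exp (-(Complex.I * Real.pi * (1 - α) / 2)))) := by
  have hlim := ((tendsto_integral_powExp_ofReal hα.2 hk).mul_const
    (exp (-(I * Real.pi * (1 - α) / 2)))).add
      ((tendsto_verticalIntegral_atTop hα.1 hk).comp Real.tendsto_log_atTop)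
  rw [add_zero] at hlim
  refine hlim.congr' ?_
  filter_upwards [eventually_gt_atTop 0] with R hR
  exact (integral_zero_powExp_I_mul_eq hα.2 hk.le hR).symm
end

section
/- Local recovery of the power-law kernel as the order tends to one: let l > 0, x ∈ ℝ, and let ψ : ℝ → ℝ be continuous on [x−l, x]. Then lim_{α → 1⁻} (1/Γ(1−α)) ∫_{x−l}^{x} (x−s)^{−α} ψ(s) ds = ψ(x). -/
/-!
The kernel `(x - s)^(-α) / Γ(1 - α)` is a nonnegative approximate identity at `s = x` as
`α → 1⁻`: its mass on `[x - l, x]` is `l^(1-α) / Γ(2 - α) → 1`, while on `s ≤ x - δ` it is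
bounded by `δ^(-α) / Γ(1 - α) → 0`, both because `1/Γ` is continuous. Mathlib's peak-function
theorem then turns this into convergence of the integrals against the continuous `ψ` to `ψ x`.
-/

open MeasureTheory intervalIntegral Filter Topology Set

lemma Real.continuous_inv_Gamma : Continuous fun s : ℝ => (Real.Gamma s)⁻¹ := by
  have := Complex.continuous_re.comp
    (Complex.differentiable_one_div_Gamma.continuous.comp Complex.continuous_ofReal)
  simpa only [Function.comp_def, Complex.Gamma_ofReal, ← Complex.ofReal_inv,
    Complex.ofReal_re] using this

lemma Real.Gamma_two_sub {α : ℝ} (hα : α ≠ 1) :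
    Real.Gamma (2 - α) = (1 - α) * Real.Gamma (1 - α) := by
  rw [← Real.Gamma_add_one (sub_ne_zero.2 hα.symm)]
  ring_nf

lemma integral_sub_rpow_neg {α : ℝ} (hα : α < 1) (x l : ℝ) :
    ∫ s in (x - l)..x, (x - s) ^ (-α) = l ^ (1 - α) / (1 - α) := by
  rw [intervalIntegral.integral_comp_sub_left (fun s : ℝ => s ^ (-α)), sub_self, sub_sub_cancel,
    integral_rpow (Or.inl (by linarith)), neg_add_eq_sub, Real.zero_rpow (by linarith), sub_zero]

noncomputable def powerLawKernel (x α s : ℝ) : ℝ := 1 / Real.Gamma (1 - α) * (x - s) ^ (-α)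

lemma measurable_powerLawKernel (x α : ℝ) : Measurable (powerLawKernel x α) := by
  unfold powerLawKernel; fun_prop

lemma powerLawKernel_nonneg {x α s : ℝ} (hα : α < 1) (hs : s ≤ x) : 0 ≤ powerLawKernel x α s := by
  have := Real.Gamma_pos_of_pos (sub_pos.2 hα)
  have : 0 ≤ x - s := sub_nonneg.2 hs
  unfold powerLawKernel; positivity

lemma setIntegral_powerLawKernel {α : ℝ} (hα : α < 1) (x : ℝ) {l : ℝ} (hl : 0 ≤ l) :
    ∫ s in Icc (x - l) x, powerLawKernel x α s = l ^ (1 - α) / Real.Gamma (2 - α) := by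
  have hΓ := (Real.Gamma_pos_of_pos (sub_pos.2 hα)).ne'
  have h1α : 1 - α ≠ 0 := sub_ne_zero.2 hα.ne'
  rw [integral_Icc_eq_integral_Ioc, ← intervalIntegral.integral_of_le (by linarith)]
  simp only [powerLawKernel]
  rw [intervalIntegral.integral_const_mul, integral_sub_rpow_neg hα, Real.Gamma_two_sub hα.ne]
  field_simp

lemma tendsto_setIntegral_powerLawKernel (x : ℝ) {l : ℝ} (hl : 0 < l) :
    Tendsto (fun α => ∫ s in Icc (x - l) x, powerLawKernel x α s) (𝓝[<] 1) (𝓝 1) := by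
  have hcont : Continuous fun α : ℝ => l ^ (1 - α) * (Real.Gamma (2 - α))⁻¹ :=
    (continuous_const.rpow (by fun_prop) fun _ => Or.inl hl.ne').mul
      (Real.continuous_inv_Gamma.comp (by fun_prop))
  have h := (hcont.tendsto 1).mono_left (nhdsWithin_le_nhds (s := Iio 1))
  norm_num [Real.Gamma_one] at h
  refine h.congr' ?_
  filter_upwards [self_mem_nhdsWithin] with α (hα : α < 1)
  rw [setIntegral_powerLawKernel hα x hl.le, div_eq_mul_inv]

-- `Real.Gamma 0 = 0` in Mathlib, so `(Real.Gamma 0)⁻¹ = 0` is the true value of `1/Γ` there.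
lemma tendsto_one_div_Gamma_one_sub :
    Tendsto (fun α : ℝ => 1 / Real.Gamma (1 - α)) (𝓝[<] 1) (𝓝 0) := by
  have hcont : Continuous fun α : ℝ => (Real.Gamma (1 - α))⁻¹ :=
    Real.continuous_inv_Gamma.comp (by fun_prop)
  have h := (hcont.tendsto 1).mono_left (nhdsWithin_le_nhds (s := Iio 1))
  simpa [Real.Gamma_zero] using h

lemma tendstoUniformlyOn_powerLawKernel_Iic (x : ℝ) {δ : ℝ} (hδ : 0 < δ) :
    TendstoUniformlyOn (powerLawKernel x) 0 (𝓝[<] 1) (Iic (x - δ)) := by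
  have hbound : Tendsto (fun α : ℝ => 1 / Real.Gamma (1 - α) * δ ^ (-α)) (𝓝[<] 1) (𝓝 0) := by
    have hcont : Continuous fun α : ℝ => δ ^ (-α) :=
      continuous_const.rpow continuous_neg fun _ => Or.inl hδ.ne'
    have := (hcont.tendsto 1).mono_left (nhdsWithin_le_nhds (s := Iio 1))
    simpa using tendsto_one_div_Gamma_one_sub.mul this
  rw [Metric.tendstoUniformlyOn_iff]
  intro ε hε
  filter_upwards [hbound.eventually (eventually_lt_nhds hε),
    Ioo_mem_nhdsLT (show (0 : ℝ) < 1 by norm_num)] with α hαε ⟨hα0, hα1⟩ s (hs : s ≤ x - δ)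
  rw [Pi.zero_apply, dist_zero_left, Real.norm_of_nonneg
    (powerLawKernel_nonneg hα1 (by linarith))]
  refine lt_of_le_of_lt ?_ hαε
  have := (Real.Gamma_pos_of_pos (sub_pos.2 hα1)).le
  exact mul_le_mul_of_nonneg_left
    (Real.rpow_le_rpow_of_nonpos hδ (by linarith) (by linarith)) (by positivity)

lemma exists_pos_Iic_diff_subset_Iic_sub {x : ℝ} {u : Set ℝ} (hu : IsOpen u) (hxu : x ∈ u) :
    ∃ δ > 0, Iic x \ u ⊆ Iic (x - δ) := by
  obtain ⟨δ, hδ, hball⟩ := Metric.isOpen_iff.1 hu x hxu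
  refine ⟨δ, hδ, fun s ⟨(hsx : s ≤ x), hsu⟩ => mem_Iic.2 <| not_lt.1 fun h => ?_⟩
  exact hsu (hball (by rw [Metric.mem_ball, Real.dist_eq, abs_lt]; constructor <;> linarith))

/-- local recovery of the power-law (Riemann–Liouville) kernel as the
order tends to one: for `ψ` continuous on `[x−l, x]`,
`(1/Γ(1−α)) ∫_{x−l}^{x} (x−s)^{−α} ψ(s) ds → ψ(x)` as `α → 1⁻`. -/
theorem stmt_14 (l x : ℝ) (hl : 0 < l) (ψ : ℝ → ℝ)
    (hψ : ContinuousOn ψ (Set.Icc (x - l) x)) :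
    Tendsto
      (fun α : ℝ => (1 / Real.Gamma (1 - α)) * ∫ s in (x - l)..x, (x - s) ^ (-α) * ψ s)
      (𝓝[<] 1) (𝓝 (ψ x)) := by
  have hxl : x - l ≤ x := by linarith
  have hnonneg : ∀ᶠ α in 𝓝[<] (1 : ℝ), ∀ s ∈ Icc (x - l) x, 0 ≤ powerLawKernel x α s := by
    filter_upwards [self_mem_nhdsWithin] with α (hα : α < 1) s hs
    exact powerLawKernel_nonneg hα hs.2
  have hsmall : ∀ u, IsOpen u → x ∈ u →
      TendstoUniformlyOn (powerLawKernel x) 0 (𝓝[<] 1) (Icc (x - l) x \ u) := by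
    intro u hu hxu
    obtain ⟨δ, hδ, hsub⟩ := exists_pos_Iic_diff_subset_Iic_sub hu hxu
    exact (tendstoUniformlyOn_powerLawKernel_Iic x hδ).mono
      ((sdiff_subset_sdiff_left Icc_subset_Iic_self).trans hsub)
  have hpeak := tendsto_setIntegral_peak_smul_of_integrableOn_of_tendsto
    measurableSet_Icc measurableSet_Icc subset_rfl self_mem_nhdsWithin measure_Icc_lt_top.ne
    hnonneg hsmall (tendsto_setIntegral_powerLawKernel x hl)
    (.of_forall fun α => (measurable_powerLawKernel x α).aestronglyMeasurable)
    hψ.integrableOn_Icc (hψ.continuousWithinAt ⟨hxl, le_rfl⟩)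
  refine hpeak.congr fun α => ?_
  rw [intervalIntegral.integral_of_le hxl, ← integral_Icc_eq_integral_Ioc,
    ← MeasureTheory.integral_const_mul]
  simp only [powerLawKernel, smul_eq_mul, mul_assoc]
end
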